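/- arXiv:2201.10992 — 4 statements merged into one kernel-verified Lean document; each statement's English description precedes it below -/
import Mathlib

section
/- Let σ ∈ (0,1) and b₀ ∈ ((1−σ)/(2−σ), 1/2) be fixed, and let b ∈ [b₀, 1−b₀]. Define φ(t) = 2t − σt − 1 + σ, x₋ = −φ(b)/(σ(2−σ)), x₊ = φ(1−b)/(σ(2−σ)), K = φ(b₀)/(2σ(2−σ)), and the intervals I₋ = [x₋ − K, x₋ + K], I₊ = [x₊ − K, x₊ + K]. Then there exists a₁ > 0 (depending only on σ and b₀) such that for all a ≥ a₁ the map F_a(y) = (1−σ)·y + 1/(exp(a·y)+1) − b satisfies: 0 ≤ F_a′(x) < 1 − σ for every x ∈ I₋ ∪ I₊, F_a(I₋) ⊆ I₊, and F_a(I₊) ⊆ I₋. -/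
open Real Filter Set

/-- The conjugate map `F_a(y) = (1-σ)y + 1/(exp(ay)+1) - b`. -/
noncomputable def F (a b σ y : ℝ) : ℝ :=
  (1 - σ) * y + 1 / (Real.exp (a * y) + 1) - b

/-- The auxiliary affine quantity `φ(t) = 2t - σt - 1 + σ`. -/
noncomputable def phi (σ t : ℝ) : ℝ := 2 * t - σ * t - 1 + σ

set_option maxHeartbeats 1000000

lemma hasDerivAt_F (a b σ x : ℝ) :
    HasDerivAt (F a b σ)
      ((1 - σ) - a * Real.exp (a * x) / (Real.exp (a * x) + 1) ^ 2) x := by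
  have h0 : HasDerivAt (fun y : ℝ => a * y) a x := by
    simpa using (hasDerivAt_id x).const_mul a
  have h1 : HasDerivAt (fun y : ℝ => Real.exp (a * y) + 1)
      (a * Real.exp (a * x)) x := by
    have := (Real.hasDerivAt_exp (a * x)).comp x h0
    simpa [mul_comm] using this.add_const 1
  have hne : Real.exp (a * x) + 1 ≠ 0 := by positivity
  have h2 := h1.inv hne
  have h3 : HasDerivAt (fun y : ℝ => (1 - σ) * y) (1 - σ) x := by
    simpa using (hasDerivAt_id x).const_mul (1 - σ)
  have h4 := (h3.add h2).sub_const b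
  have hfun : F a b σ = fun y => (1 - σ) * y + (Real.exp (a * y) + 1)⁻¹ - b := by
    funext y; simp [F, one_div]
  rw [hfun]
  have e : (1 - σ) - a * Real.exp (a * x) / (Real.exp (a * x) + 1) ^ 2
      = 1 - σ + -(a * Real.exp (a * x)) / (Real.exp (a * x) + 1) ^ 2 := by ring
  rw [e]
  exact h4

lemma main_aux (σ b₀ b a xm xp K : ℝ) (hσ0 : 0 < σ) (hσ1 : σ < 1)
    (hφ0 : 0 < phi σ b₀) (hb1 : b₀ ≤ b) (hb2 : b ≤ 1 - b₀) (ha0 : 0 < a)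
    (hxm : xm = -phi σ b / (σ * (2 - σ)))
    (hxp : xp = phi σ (1 - b) / (σ * (2 - σ)))
    (hKd : K = phi σ b₀ / (2 * σ * (2 - σ)))
    (hba : a * Real.exp (-(a * K)) ≤ 1 - σ)
    (hexp : Real.exp (-(a * K)) ≤ σ * K) :
    (∀ x ∈ Set.Icc (xm - K) (xm + K) ∪ Set.Icc (xp - K) (xp + K),
        0 ≤ deriv (F a b σ) x ∧ deriv (F a b σ) x < 1 - σ) ∧
      F a b σ '' Set.Icc (xm - K) (xm + K) ⊆ Set.Icc (xp - K) (xp + K) ∧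
      F a b σ '' Set.Icc (xp - K) (xp + K) ⊆ Set.Icc (xm - K) (xm + K) := by
  have h2σ : 0 < 2 - σ := by linarith
  have hd : 0 < σ * (2 - σ) := by positivity
  have hσne : σ ≠ 0 := ne_of_gt hσ0
  have h2σne : (2 : ℝ) - σ ≠ 0 := ne_of_gt h2σ
  have hK : 0 < K := by rw [hKd]; positivity
  have hφb : phi σ b₀ ≤ phi σ b := by simp only [phi]; nlinarith
  have hφb' : phi σ b₀ ≤ phi σ (1 - b) := by simp only [phi]; nlinarith
  have hsum : xm + 2 * K = (phi σ b₀ - phi σ b) / (σ * (2 - σ)) := by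
    rw [hxm, hKd]; field_simp; ring
  have hxm2 : xm + K ≤ -K := by
    have h := div_nonpos_of_nonpos_of_nonneg (by linarith : phi σ b₀ - phi σ b ≤ 0) hd.le
    rw [← hsum] at h; linarith
  have hsum' : xp - 2 * K = (phi σ (1 - b) - phi σ b₀) / (σ * (2 - σ)) := by
    rw [hxp, hKd]; field_simp
  have hxp2 : K ≤ xp - K := by
    have h := div_nonneg (by linarith : (0:ℝ) ≤ phi σ (1 - b) - phi σ b₀) hd.le
    rw [← hsum'] at h; linarith
  have e1 : (1 - σ) * xm + 1 - b = xp := by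
    rw [hxm, hxp]; simp only [phi]; field_simp; ring
  have e2 : (1 - σ) * xp - b = xm := by
    rw [hxm, hxp]; simp only [phi]; field_simp; ring
  have hσK : 0 ≤ σ * K := by positivity
  have hprod : Real.exp (-(a * K)) * Real.exp (a * K) = 1 := by
    rw [← Real.exp_add]; simp
  have hexpK := Real.exp_pos (-(a * K))
  refine ⟨?_, ?_, ?_⟩
  · -- derivative bounds
    intro x hx
    have hE0 := Real.exp_pos (a * x)
    set E := Real.exp (a * x) with hEdef
    have hderiv : deriv (F a b σ) x = (1 - σ) - a * E / (E + 1) ^ 2 :=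
      (hasDerivAt_F a b σ x).deriv
    have hDpos : 0 < a * E / (E + 1) ^ 2 := by positivity
    have hDle : a * E / (E + 1) ^ 2 ≤ 1 - σ := by
      rcases hx with hx | hx
      · -- x ≤ -K
        have hxle : x ≤ -K := le_trans hx.2 hxm2
        have hax : a * x ≤ -(a * K) := by
          have := mul_le_mul_of_nonneg_left hxle ha0.le; linarith
        have hE : E ≤ Real.exp (-(a * K)) := by
          rw [hEdef]; exact Real.exp_le_exp.mpr hax
        have h1le : (1:ℝ) ≤ (E + 1) ^ 2 := by nlinarith
        calc a * E / (E + 1) ^ 2 ≤ a * E := div_le_self (by positivity) h1le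
          _ ≤ a * Real.exp (-(a * K)) := mul_le_mul_of_nonneg_left hE ha0.le
          _ ≤ 1 - σ := hba
      · -- K ≤ x
        have hxge : K ≤ x := le_trans hxp2 hx.1
        have hax : a * K ≤ a * x := mul_le_mul_of_nonneg_left hxge ha0.le
        have hE : Real.exp (a * K) ≤ E := by
          rw [hEdef]; exact Real.exp_le_exp.mpr hax
        rw [div_le_iff₀ (by positivity)]
        have step1 : a * E ≤ a * Real.exp (-(a * K)) * (E * E) := by
          have h := mul_le_mul_of_nonneg_left hE
            (by positivity : (0:ℝ) ≤ a * Real.exp (-(a * K)) * E)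
          calc a * E = a * Real.exp (-(a * K)) * E * Real.exp (a * K) := by
                linear_combination (-(a * E)) * hprod
            _ ≤ a * Real.exp (-(a * K)) * E * E := h
            _ = a * Real.exp (-(a * K)) * (E * E) := by ring
        have step2 : a * Real.exp (-(a * K)) * (E * E) ≤ (1 - σ) * (E * E) :=
          mul_le_mul_of_nonneg_right hba (by positivity)
        have step3 : (1 - σ) * (E * E) ≤ (1 - σ) * (E + 1) ^ 2 := by nlinarith
        linarith
    rw [hderiv]
    exact ⟨by linarith, by linarith⟩
  · -- F (I-) ⊆ I+
    rintro _ ⟨x, ⟨hx1, hx2⟩, rfl⟩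
    have hxle : x ≤ -K := le_trans hx2 hxm2
    have hE0 := Real.exp_pos (a * x)
    set E := Real.exp (a * x) with hEdef
    have hax : a * x ≤ -(a * K) := by
      have := mul_le_mul_of_nonneg_left hxle ha0.le; linarith
    have hE : E ≤ Real.exp (-(a * K)) := by
      rw [hEdef]; exact Real.exp_le_exp.mpr hax
    have hEσK : E ≤ σ * K := le_trans hE hexp
    have hfle : 1 / (E + 1) ≤ 1 := by
      rw [div_le_one (by positivity)]; linarith
    have hfge : 1 - E ≤ 1 / (E + 1) := by
      rw [le_div_iff₀ (by positivity)]; nlinarith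
    have hm1 : (1 - σ) * (xm - K) ≤ (1 - σ) * x :=
      mul_le_mul_of_nonneg_left hx1 (by linarith)
    have hm2 : (1 - σ) * x ≤ (1 - σ) * (xm + K) :=
      mul_le_mul_of_nonneg_left hx2 (by linarith)
    simp only [F]
    constructor
    · nlinarith
    · nlinarith
  · -- F (I+) ⊆ I-
    rintro _ ⟨x, ⟨hx1, hx2⟩, rfl⟩
    have hxge : K ≤ x := le_trans hxp2 hx1
    have hE0 := Real.exp_pos (a * x)
    set E := Real.exp (a * x) with hEdef
    have hax : a * K ≤ a * x := mul_le_mul_of_nonneg_left hxge ha0.le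
    have hE : Real.exp (a * K) ≤ E := by
      rw [hEdef]; exact Real.exp_le_exp.mpr hax
    have hfge : (0:ℝ) ≤ 1 / (E + 1) := by positivity
    have hfle : 1 / (E + 1) ≤ σ * K := by
      have h1 : 1 / (E + 1) ≤ Real.exp (-(a * K)) := by
        rw [div_le_iff₀ (by positivity)]
        have h := mul_le_mul_of_nonneg_left hE hexpK.le
        nlinarith
      exact le_trans h1 hexp
    have hm1 : (1 - σ) * (xp - K) ≤ (1 - σ) * x :=
      mul_le_mul_of_nonneg_left hx1 (by linarith)
    have hm2 : (1 - σ) * x ≤ (1 - σ) * (xp + K) :=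
      mul_le_mul_of_nonneg_left hx2 (by linarith)
    simp only [F]
    constructor
    · nlinarith
    · nlinarith

/-- For large `a`, `F_a` swaps the two intervals `I₋` and `I₊` around
`x₋ = -φ(b)/(σ(2-σ))` and `x₊ = φ(1-b)/(σ(2-σ))`, with derivative in `[0, 1-σ)`
on their union. -/
theorem swapped_invariant_intervals (σ b₀ : ℝ) (hσ : σ ∈ Set.Ioo (0:ℝ) 1)
    (hb₀ : b₀ ∈ Set.Ioo ((1 - σ) / (2 - σ)) (1/2)) :
    ∃ a₁ > (0:ℝ), ∀ b ∈ Set.Icc b₀ (1 - b₀), ∀ a ≥ a₁,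
      let xm : ℝ := -phi σ b / (σ * (2 - σ))
      let xp : ℝ := phi σ (1 - b) / (σ * (2 - σ))
      let K : ℝ := phi σ b₀ / (2 * σ * (2 - σ))
      (∀ x ∈ Set.Icc (xm - K) (xm + K) ∪ Set.Icc (xp - K) (xp + K),
        0 ≤ deriv (F a b σ) x ∧ deriv (F a b σ) x < 1 - σ) ∧
      F a b σ '' Set.Icc (xm - K) (xm + K) ⊆ Set.Icc (xp - K) (xp + K) ∧
      F a b σ '' Set.Icc (xp - K) (xp + K) ⊆ Set.Icc (xm - K) (xm + K) := by
  obtain ⟨hσ0, hσ1⟩ := hσ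
  obtain ⟨hb₀l, hb₀u⟩ := hb₀
  have h2σ : 0 < 2 - σ := by linarith
  have hφ0 : 0 < phi σ b₀ := by
    rw [div_lt_iff₀ h2σ] at hb₀l
    simp only [phi]; nlinarith
  set K : ℝ := phi σ b₀ / (2 * σ * (2 - σ)) with hKdef
  have hK : 0 < K := by rw [hKdef]; positivity
  have hT0 : Tendsto (fun a : ℝ => a * K) atTop atTop :=
    tendsto_id.atTop_mul_const hK
  have hT1 : Tendsto (fun a : ℝ => Real.exp (-(a * K))) atTop (nhds 0) :=
    Real.tendsto_exp_atBot.comp (tendsto_neg_atTop_atBot.comp hT0)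
  have hT2 : Tendsto (fun a : ℝ => a * Real.exp (-(a * K))) atTop (nhds 0) := by
    have h := (tendsto_pow_mul_exp_neg_atTop_nhds_zero 1).comp hT0
    have h2 := h.const_mul (1 / K)
    rw [mul_zero] at h2
    convert h2 using 2 with a
    simp only [Function.comp_apply, pow_one]
    field_simp
  have hev1 := hT2.eventually_lt_const (show (0:ℝ) < 1 - σ by linarith)
  have hev2 := hT1.eventually_lt_const (show (0:ℝ) < σ * K by positivity)
  obtain ⟨a₀, ha₀⟩ := eventually_atTop.mp (hev1.and hev2)
  refine ⟨max a₀ 1, lt_of_lt_of_le one_pos (le_max_right _ _), ?_⟩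
  intro b hb a ha
  have ha0 : (0:ℝ) < a := lt_of_lt_of_le one_pos (le_trans (le_max_right _ _) ha)
  obtain ⟨hba, hexp⟩ := ha₀ a (le_trans (le_max_left _ _) ha)
  exact main_aux σ b₀ b a _ _ _ hσ0 hσ1 hφ0 hb.1 hb.2 ha0 rfl rfl rfl hba.le hexp.le
end

section
/- Let σ ∈ [0,1) and b ∈ (0,1) be fixed, and let F_a(y) = (1−σ)·y + 1/(exp(a·y)+1) − b. For every a > 4(1−σ), the derivative F_a′ has exactly two zeros c₋(a) < 0 < c₊(a), and these zeros do not depend on b. Moreover, for fixed σ, both c₋(a) → 0 and c₊(a) → 0 as a → ∞. -/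
open Real Filter Set

lemma deriv_F (a b σ x : ℝ) :
    deriv (F a b σ) x = (1 - σ) - a * Real.exp (a * x) / (Real.exp (a * x) + 1)^2 := by
  have hne : Real.exp (a * x) + 1 ≠ 0 := by positivity
  have h1 : HasDerivAt (fun y : ℝ => Real.exp (a * y) + 1) (Real.exp (a * x) * a) x := by
    simpa using ((Real.hasDerivAt_exp (a*x)).comp x ((hasDerivAt_id x).const_mul a)).add_const 1
  have h2 : HasDerivAt (fun y : ℝ => 1 / (Real.exp (a * y) + 1))
      (-(Real.exp (a * x) * a) / (Real.exp (a * x) + 1)^2) x := by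
    simpa [one_div, Pi.inv_def] using h1.inv hne
  have h3 : HasDerivAt (fun y => F a b σ y)
      ((1 - σ) + -(Real.exp (a * x) * a) / (Real.exp (a * x) + 1)^2) x := by
    simpa [F, one_div] using (((hasDerivAt_id x).const_mul (1-σ)).add h2).sub_const b
  rw [show F a b σ = fun y => F a b σ y from rfl, h3.deriv]; ring

/-- the larger root of s(t+1)^2 = a t -/
noncomputable def tplus (s a : ℝ) : ℝ := (a - 2*s + Real.sqrt (a*(a-4*s))) / (2*s)

lemma tplus_gt_one {s a : ℝ} (hs : 0 < s) (ha : 4*s < a) : 1 < tplus s a := by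
  have hD : 0 ≤ Real.sqrt (a*(a-4*s)) := Real.sqrt_nonneg _
  rw [tplus, lt_div_iff₀ (by linarith)]
  linarith

lemma quad_iff {s a : ℝ} (hs : 0 < s) (ha : 4*s < a) (t : ℝ) (ht : 0 < t) :
    s*(t+1)^2 = a*t ↔ t = tplus s a ∨ t = (tplus s a)⁻¹ := by
  set D := Real.sqrt (a*(a-4*s)) with hDdef
  have hDnn : 0 ≤ D := Real.sqrt_nonneg _
  have hD2 : D^2 = a*(a-4*s) := Real.sq_sqrt (by nlinarith)
  have htp : 0 < tplus s a := lt_trans one_pos (tplus_gt_one hs ha)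
  have hinv : (tplus s a)⁻¹ = (a - 2*s - D) / (2*s) := by
    rw [eq_div_iff (by linarith), inv_mul_eq_div, div_eq_iff htp.ne', tplus, ← hDdef]
    field_simp
    nlinarith
  have key : s*(t+1)^2 - a*t = s * (t - tplus s a) * (t - (tplus s a)⁻¹) := by
    rw [hinv, tplus, ← hDdef]
    field_simp
    nlinarith
  constructor
  · intro h
    have h0 : s * (t - tplus s a) * (t - (tplus s a)⁻¹) = 0 := by linarith [key]
    rcases mul_eq_zero.1 h0 with h1 | h1
    · rcases mul_eq_zero.1 h1 with h2 | h2
      · exact absurd h2 hs.ne'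
      · exact Or.inl (by linarith)
    · exact Or.inr (by linarith)
  · rintro (rfl | rfl) <;> nlinarith [key]

lemma cp_tendsto {s : ℝ} (hs : 0 < s) (hs1 : s ≤ 1) :
    Filter.Tendsto (fun a => Real.log (tplus s a) / a) Filter.atTop (nhds 0) := by
  have hupper : Tendsto (fun a => (Real.log a - Real.log s)/a) atTop (nhds 0) := by
    have h1 : Tendsto (fun a:ℝ => Real.log a / a) atTop (nhds 0) :=
      Real.isLittleO_log_id_atTop.tendsto_div_nhds_zero
    have h2 : Tendsto (fun a:ℝ => Real.log s / a) atTop (nhds 0) :=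
      tendsto_const_nhds.div_atTop tendsto_id
    simpa [sub_div] using h1.sub h2
  apply tendsto_of_tendsto_of_tendsto_of_le_of_le' tendsto_const_nhds hupper
  · filter_upwards [eventually_gt_atTop (4*s)] with a ha
    exact (div_pos (Real.log_pos (tplus_gt_one hs ha)) (by linarith)).le
  · filter_upwards [eventually_gt_atTop (4*s)] with a ha
    have ha0 : 0 < a := by linarith
    have hbound : tplus s a ≤ a / s := by
      rw [tplus, div_le_div_iff₀ (by linarith) hs]
      have hD : Real.sqrt (a*(a-4*s)) ≤ a := by
        have h := Real.sqrt_le_sqrt (show a*(a-4*s) ≤ a^2 by nlinarith)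
        rwa [Real.sqrt_sq ha0.le] at h
      nlinarith
    have hlog : Real.log (tplus s a) ≤ Real.log a - Real.log s := by
      rw [← Real.log_div ha0.ne' hs.ne']
      exact Real.log_le_log (lt_trans one_pos (tplus_gt_one hs ha)) hbound
    gcongr

/-- For `a > 4(1-σ)` the derivative of `F_a` has exactly two zeros `c₋(a) < 0 < c₊(a)`,
independent of `b`, and both tend to `0` as `a → ∞`. -/
theorem critical_points_of_F (σ b : ℝ) (hσ : σ ∈ Set.Ico (0:ℝ) 1)
    (hb : b ∈ Set.Ioo (0:ℝ) 1) :
    ∃ cm cp : ℝ → ℝ,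
      (∀ a : ℝ, 4 * (1 - σ) < a →
        cm a < 0 ∧ 0 < cp a ∧
        (∀ x : ℝ, deriv (F a b σ) x = 0 ↔ x = cm a ∨ x = cp a) ∧
        (∀ b' ∈ Set.Ioo (0:ℝ) 1, ∀ x : ℝ,
          deriv (F a b' σ) x = 0 ↔ x = cm a ∨ x = cp a)) ∧
      Filter.Tendsto cm Filter.atTop (nhds 0) ∧
      Filter.Tendsto cp Filter.atTop (nhds 0) := by
  set s := 1 - σ with hsdef
  have hs : 0 < s := by simp [hsdef]; linarith [hσ.2]
  have hs1 : s ≤ 1 := by simp [hsdef]; linarith [hσ.1]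
  refine ⟨fun a => -(Real.log (tplus s a) / a), fun a => Real.log (tplus s a) / a, ?_, ?_, ?_⟩
  · intro a ha
    have ha0 : 0 < a := by linarith
    have htp1 : 1 < tplus s a := tplus_gt_one hs ha
    have hlog : 0 < Real.log (tplus s a) := Real.log_pos htp1
    have hcp : 0 < Real.log (tplus s a) / a := div_pos hlog ha0
    have main : ∀ b' : ℝ, ∀ x : ℝ,
        deriv (F a b' σ) x = 0 ↔
          x = -(Real.log (tplus s a) / a) ∨ x = Real.log (tplus s a) / a := by
      intro b' x
      rw [deriv_F]
      set t := Real.exp (a * x) with htdef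
      have ht : 0 < t := Real.exp_pos _
      have hne : (t + 1)^2 ≠ 0 := by positivity
      have step1 : (1 - σ) - a * t / (t + 1)^2 = 0 ↔ s*(t+1)^2 = a*t := by
        rw [sub_eq_zero, eq_div_iff hne, hsdef]
      rw [step1, quad_iff hs ha t ht]
      have e1 : t = tplus s a ↔ x = Real.log (tplus s a) / a := by
        rw [htdef, eq_div_iff ha0.ne']
        constructor
        · intro h; rw [← h, Real.log_exp]; ring
        · intro h
          rw [show a * x = Real.log (tplus s a) by linarith,
            Real.exp_log (by linarith)]
      have e2 : t = (tplus s a)⁻¹ ↔ x = -(Real.log (tplus s a) / a) := by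
        rw [htdef]
        have : -(Real.log (tplus s a) / a) = Real.log (tplus s a)⁻¹ / a := by
          rw [Real.log_inv]; ring
        rw [this, eq_div_iff ha0.ne']
        have htpinv : 0 < (tplus s a)⁻¹ := by positivity
        constructor
        · intro h; rw [← h, Real.log_exp]; ring
        · intro h
          rw [show a * x = Real.log (tplus s a)⁻¹ by linarith, Real.exp_log htpinv]
      rw [e1, e2, or_comm]
    exact ⟨by linarith, hcp, main b, fun b' _ => main b'⟩
  · -- cm → 0
    simpa using (cp_tendsto hs hs1).neg
  · exact cp_tendsto hs hs1
end

section
/- Fix σ ∈ [0,1) and b ∈ (0,1) with b ≤ 1/2 and b < (1−σ)/(2−σ). Then there exists a₀ > 0 such that for every a > a₀ the map F_a(y) = (1−σ)·y + 1/(exp(a·y)+1) − b, whose derivative has exactly two zeros c₋ < 0 < c₊, admits a point x₀ ∈ (c₋, c₊) with F_a(x₀) = c₋ and F_a³(x₀) > c₊ (where F_a³ denotes the third iterate of F_a). -/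
open Real Filter Set

lemma F_hasDerivAt (a b σ x : ℝ) :
    HasDerivAt (F a b σ) ((1 - σ) - a * Real.exp (a*x) / (Real.exp (a*x) + 1)^2) x := by
  have h1 : HasDerivAt (fun y : ℝ => a * y) a x := by
    simpa using (hasDerivAt_id x).const_mul a
  have h2 : HasDerivAt (fun y : ℝ => Real.exp (a*y) + 1) (Real.exp (a*x) * a) x :=
    (h1.exp).add_const 1
  have hne : Real.exp (a*x) + 1 ≠ 0 := by positivity
  have h3 : HasDerivAt (fun y : ℝ => (Real.exp (a*y) + 1)⁻¹)
      (-(Real.exp (a*x) * a) / (Real.exp (a*x) + 1)^2) x := h2.inv hne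
  have h4 : HasDerivAt (fun y : ℝ => (1-σ) * y) (1-σ) x := by
    simpa using (hasDerivAt_id x).const_mul (1-σ)
  have := (h4.add h3).sub_const b
  refine (this.congr_deriv ?_).congr_of_eventuallyEq (Filter.Eventually.of_forall fun y => ?_)
  · ring
  · simp [F, one_div]

lemma F_cont (a b σ : ℝ) : Continuous (F a b σ) := by
  unfold F
  have : ∀ y : ℝ, Real.exp (a*y) + 1 ≠ 0 := fun y => by positivity
  fun_prop (disch := assumption)

lemma crit_exists (t a : ℝ) (ht0 : 0 < t) (ht1 : t ≤ 1) (ha4 : 4 < a) :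
    ∃ u : ℝ, 1 < u ∧ u ≤ a/t ∧ a/(2*t) ≤ u + 1 ∧
      ∀ E : ℝ, 0 < E → (t - a*E/(E+1)^2 = 0 ↔ E = u ∨ E = u⁻¹) := by
  obtain ⟨s, hsdef⟩ : ∃ s : ℝ, s = a/t - 2 := ⟨_, rfl⟩
  have hs2 : 2 < s := by
    have : 4 < a/t := by rw [lt_div_iff₀ ht0]; nlinarith
    rw [hsdef]; linarith
  obtain ⟨r, hrdef⟩ : ∃ r : ℝ, r = Real.sqrt (s^2 - 4) := ⟨_, rfl⟩
  have hr2 : r^2 = s^2 - 4 := by rw [hrdef]; exact Real.sq_sqrt (by nlinarith)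
  have hr0 : 0 < r := by rw [hrdef]; exact Real.sqrt_pos.mpr (by nlinarith)
  have hrs : r < s := by nlinarith
  obtain ⟨u, hudef⟩ : ∃ u : ℝ, u = (s + r)/2 := ⟨_, rfl⟩
  obtain ⟨v, hvdef⟩ : ∃ v : ℝ, v = (s - r)/2 := ⟨_, rfl⟩
  have hu1 : 1 < u := by rw [hudef]; linarith
  have hu0 : 0 < u := by linarith
  have hus : u ≤ s := by rw [hudef]; linarith
  have hus2 : s/2 ≤ u := by rw [hudef]; linarith
  have huv : u * v = 1 := by rw [hudef, hvdef]; linear_combination (-1/4)*hr2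
  have hsum : u + v = s := by rw [hudef, hvdef]; ring
  have hv0 : 0 < v := by nlinarith
  have hvinv : v = u⁻¹ := by field_simp; linarith [huv]
  have hu2 : u^2 - s*u + 1 = 0 := by rw [hudef]; linear_combination hr2/4
  have hv2 : v^2 - s*v + 1 = 0 := by rw [hvdef]; linear_combination hr2/4
  have hts : t * s = a - 2*t := by rw [hsdef]; field_simp
  refine ⟨u, hu1, ?_, ?_, ?_⟩
  · have : s ≤ a/t := by rw [hsdef]; linarith
    linarith
  · have : a/(2*t) = s/2 + 1 := by rw [hsdef, sub_div, div_div]; ring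
    linarith
  · intro E hE
    have hE1 : (0:ℝ) < E + 1 := by linarith
    rw [← hvinv]
    constructor
    · intro h
      have h' : t * (E+1)^2 = a * E := by
        field_simp at h; linarith
      have key : (E - u) * (E - v) = 0 := by
        have h2 : t * ((E - u) * (E - v)) = 0 := by
          linear_combination (-t*E)*hsum + t*huv + (-E)*hts + h'
        rcases mul_eq_zero.mp h2 with h3 | h3
        · exact absurd h3 (ne_of_gt ht0)
        · exact h3
      rcases mul_eq_zero.mp key with h3 | h3
      · left; linarith
      · right; linarith
    · rintro (hEu | hEv)
      · rw [hEu]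
        have h' : t * (u+1)^2 = a * u := by linear_combination t*hu2 + u*hts
        have hu1' : (0:ℝ) < u + 1 := by linarith
        field_simp
        linarith
      · rw [hEv]
        have h' : t * (v+1)^2 = a * v := by linear_combination t*hv2 + v*hts
        have hv1' : (0:ℝ) < v + 1 := by linarith
        field_simp
        linarith

set_option maxHeartbeats 1000000 in
/-- For large `a` there is a point `x₀` between the two critical points with
`F_a(x₀) = c₋` and `F_a³(x₀) > c₊`. -/
theorem preimage_of_critical_point (σ b : ℝ) (hσ : σ ∈ Set.Ico (0:ℝ) 1)
    (hb : b ∈ Set.Ioo (0:ℝ) 1) (hb2 : b ≤ 1/2) (hbσ : b < (1 - σ) / (2 - σ)) :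
    ∃ a₀ > (0:ℝ), ∀ a > a₀,
      ∃ cm cp x₀ : ℝ, cm < 0 ∧ 0 < cp ∧
        (∀ x : ℝ, deriv (F a b σ) x = 0 ↔ x = cm ∨ x = cp) ∧
        x₀ ∈ Set.Ioo cm cp ∧ F a b σ x₀ = cm ∧ cp < (F a b σ)^[3] x₀ := by
  obtain ⟨hσ0, hσ1⟩ := hσ
  obtain ⟨hb0, hb1⟩ := hb
  obtain ⟨t, htdef⟩ : ∃ t : ℝ, t = 1 - σ := ⟨_, rfl⟩
  have ht0 : 0 < t := by rw [htdef]; linarith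
  have ht1 : t ≤ 1 := by rw [htdef]; linarith
  obtain ⟨δ, hδdef⟩ : ∃ δ : ℝ, δ = t - b*(1+t) := ⟨_, rfl⟩
  have hδ0 : 0 < δ := by
    have h2σ : (0:ℝ) < 2 - σ := by linarith
    rw [← htdef] at hbσ
    rw [lt_div_iff₀ h2σ] at hbσ
    have h21 : 2 - σ = 1 + t := by rw [htdef]; ring
    rw [h21] at hbσ
    rw [hδdef]; linarith
  refine ⟨4 + 64/(t*b^2) + 4/b + 64/(t*δ^2) + 4/δ, by positivity, ?_⟩
  intro a ha
  have hp1 : 0 < 64/(t*b^2) := by positivity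
  have hp2 : 0 < 4/b := by positivity
  have hp3 : 0 < 64/(t*δ^2) := by positivity
  have hp4 : 0 < 4/δ := by positivity
  have ha4 : 4 < a := by linarith
  have ha0 : 0 < a := by linarith
  obtain ⟨u, hu1, hua, huplus, hquad⟩ := crit_exists t a ht0 ht1 ha4
  have hu0 : 0 < u := by linarith
  -- critical points
  obtain ⟨c, hcdef⟩ : ∃ c : ℝ, c = Real.log u / a := ⟨_, rfl⟩
  have hc0 : 0 < c := by
    rw [hcdef]; exact div_pos (Real.log_pos hu1) ha0
  have hexp_cp : Real.exp (a * c) = u := by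
    rw [hcdef, show a * (Real.log u / a) = Real.log u by field_simp; try ring]
    exact Real.exp_log hu0
  have hexp_cm : Real.exp (a * (-c)) = u⁻¹ := by
    rw [hcdef, show a * -(Real.log u / a) = -Real.log u by field_simp]
    rw [Real.exp_neg, Real.exp_log hu0]
  -- bound c ≤ 2/√(ta)
  have hta0 : (0:ℝ) < t*a := by positivity
  have hsq0 : (0:ℝ) < Real.sqrt (t*a) := Real.sqrt_pos.mpr hta0
  have hcε : c ≤ 2 / Real.sqrt (t*a) := by
    have hat0 : (0:ℝ) < a/t := by positivity
    have hsqa : Real.sqrt (a/t) * Real.sqrt (t*a) = a := by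
      rw [← Real.sqrt_mul hat0.le]
      rw [show a/t * (t*a) = a^2 by field_simp]
      exact Real.sqrt_sq ha0.le
    have hlog1 : Real.log u ≤ Real.log (a/t) := Real.log_le_log hu0 hua
    have hlog2 : Real.log (a/t) ≤ 2 * Real.sqrt (a/t) := by
      have h1 : Real.log (Real.sqrt (a/t)) ≤ Real.sqrt (a/t) - 1 :=
        Real.log_le_sub_one_of_pos (Real.sqrt_pos.mpr hat0)
      rw [Real.log_sqrt hat0.le] at h1
      linarith
    have h3 : c ≤ 2 * Real.sqrt (a/t) / a := by
      rw [hcdef]; gcongr; linarith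
    have h4 : 2 * Real.sqrt (a/t) / a = 2 / Real.sqrt (t*a) := by
      rw [div_eq_div_iff (ne_of_gt ha0) (ne_of_gt hsq0)]; linear_combination 2*hsqa
    linarith
  -- numeric smallness facts
  have hεb : 2 / Real.sqrt (t*a) < b/4 := by
    have h1 : 64/b^2 < t*a := by
      have h0 : t * (64/(t*b^2)) < t * a :=
        mul_lt_mul_of_pos_left (by linarith) ht0
      calc 64/b^2 = t*(64/(t*b^2)) := by field_simp
        _ < t*a := h0
    have h2 : 8/b < Real.sqrt (t*a) := by
      rw [show (8:ℝ)/b = Real.sqrt ((8/b)^2) from (Real.sqrt_sq (by positivity)).symm]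
      apply Real.sqrt_lt_sqrt (by positivity)
      rw [show ((8:ℝ)/b)^2 = 64/b^2 by rw [div_pow]; norm_num]
      exact h1
    calc 2 / Real.sqrt (t*a) < 2 / (8/b) := by
          apply div_lt_div_of_pos_left (by norm_num) (by positivity) h2
      _ = b/4 := by rw [div_div_eq_mul_div]; ring
  have hεδ : 2 / Real.sqrt (t*a) < δ/4 := by
    have h1 : 64/δ^2 < t*a := by
      have h0 : t * (64/(t*δ^2)) < t * a :=
        mul_lt_mul_of_pos_left (by linarith) ht0
      calc 64/δ^2 = t*(64/(t*δ^2)) := by field_simp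
        _ < t*a := h0
    have h2 : 8/δ < Real.sqrt (t*a) := by
      rw [show (8:ℝ)/δ = Real.sqrt ((8/δ)^2) from (Real.sqrt_sq (by positivity)).symm]
      apply Real.sqrt_lt_sqrt (by positivity)
      rw [show ((8:ℝ)/δ)^2 = 64/δ^2 by rw [div_pow]; norm_num]
      exact h1
    calc 2 / Real.sqrt (t*a) < 2 / (8/δ) := by
          apply div_lt_div_of_pos_left (by norm_num) (by positivity) h2
      _ = δ/4 := by rw [div_div_eq_mul_div]; ring
  have h2ab : 2/a < b/2 := by
    rw [div_lt_div_iff₀ ha0 (by norm_num)]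
    have h : 4/b < a := by linarith
    rw [div_lt_iff₀ hb0] at h
    linarith only [h]
  have h2aδ : 2/a < δ/2 := by
    rw [div_lt_div_iff₀ ha0 (by norm_num)]
    have h : 4/δ < a := by linarith
    rw [div_lt_iff₀ hδ0] at h
    linarith only [h]
  -- bound 1/(u+1) ≤ 2/a
  have hu1pos : (0:ℝ) < u + 1 := by linarith
  have hfrac : 1/(u+1) ≤ 2*t/a := by
    have h1 : (0:ℝ) < a/(2*t) := by positivity
    have h2 : 1/(u+1) ≤ 1/(a/(2*t)) := by
      apply one_div_le_one_div_of_le h1 huplus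
    rwa [one_div_div] at h2
  have hfrac' : 1/(u+1) ≤ 2/a := by
    have h : 2*t/a ≤ 2/a := by gcongr <;> linarith
    linarith only [h, hfrac]
  have hufrac : 1/2 < u/(u+1) := by
    rw [div_lt_div_iff₀ (by norm_num) hu1pos]
    linarith only [hu1]
  -- value of F at the critical points
  have hinv1 : 1/(u⁻¹+1) = u/(u+1) := by
    have h : u⁻¹+1 = (1+u)/u := by field_simp
    rw [h, one_div_div]
    ring
  have hFcm : F a b σ (-c) = -(t*c) + u/(u+1) - b := by
    simp only [F]; rw [hexp_cm, ← htdef, hinv1]; try ring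
  have hFcp : F a b σ c = t*c + 1/(u+1) - b := by
    simp only [F]; rw [hexp_cp, ← htdef]; try ring
  have htc : t*c ≤ c := mul_le_of_le_one_left hc0.le ht1
  -- I2 : -c < F(-c)
  have hI2 : -c < F a b σ (-c) := by
    rw [hFcm]; linarith only [htc, hufrac, hb2, hc0]
  -- I3 : F(c) < -c
  have hI3 : F a b σ c < -c := by
    rw [hFcp]
    have h : c < b/4 := lt_of_le_of_lt hcε hεb
    linarith only [htc, hfrac', h2ab, h]
  -- I4 : c < F (F (-c))
  have hI4 : c < F a b σ (F a b σ (-c)) := by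
    have hw : F a b σ (-c) = -(t*c) + u/(u+1) - b := hFcm
    obtain ⟨w, hwdef⟩ : ∃ w : ℝ, w = F a b σ (-c) := ⟨_, rfl⟩
    have hwval : w = -(t*c) + u/(u+1) - b := by rw [hwdef, hFcm]
    have husplit : u/(u+1) = 1 - 1/(u+1) := by field_simp; ring
    have hw_lb : 1 - b - c - 2/a ≤ w := by
      rw [hwval, husplit]; linarith only [htc, hfrac']
    have hexp_pos : 0 < 1/(Real.exp (a*w) + 1) := by positivity
    have hFw : F a b σ w = t*w + 1/(Real.exp (a*w) + 1) - b := by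
      simp only [F]; rw [← htdef]
    have htw : t*(1 - b - c - 2/a) ≤ t*w := by
      apply mul_le_mul_of_nonneg_left hw_lb ht0.le
    have e2 : t*(2/a) ≤ 2/a := mul_le_of_le_one_left (by positivity) ht1
    have hexpand : t - t*b - c - 2/a ≤ t*(1 - b - c - 2/a) := by
      have e3 : t*(1 - b - c - 2/a) = t - t*b - t*c - t*(2/a) := by ring
      rw [e3]; linarith only [htc, e2]
    have hcδ : c < δ/4 := lt_of_le_of_lt hcε hεδ
    rw [← hwdef, hFw]
    linarith only [hδdef, hexpand, htw, hexp_pos, hcδ, h2aδ]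
  -- IVT
  have hcmcp : -c < c := by linarith
  have hcont : ContinuousOn (F a b σ) (Set.Icc (-c) c) := (F_cont a b σ).continuousOn
  have hIoo : -c ∈ Set.Ioo (F a b σ c) (F a b σ (-c)) := ⟨hI3, hI2⟩
  have hsub := intermediate_value_Ioo' (le_of_lt hcmcp) hcont
  obtain ⟨x₀, hx₀mem, hx₀eq⟩ := hsub hIoo
  refine ⟨-c, c, x₀, by linarith, hc0, ?_, hx₀mem, hx₀eq, ?_⟩
  · intro x
    have hd : deriv (F a b σ) x
        = t - a * Real.exp (a*x) / (Real.exp (a*x) + 1)^2 := by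
      rw [(F_hasDerivAt a b σ x).deriv, ← htdef]
    rw [hd]
    rw [hquad (Real.exp (a*x)) (Real.exp_pos _)]
    constructor
    · rintro (hE | hE)
      · right
        have h1 : a * x = Real.log u := by
          have := congrArg Real.log hE
          rwa [Real.log_exp] at this
        rw [hcdef, eq_div_iff (ne_of_gt ha0)]
        linear_combination h1
      · left
        have h1 : a * x = Real.log u⁻¹ := by
          have := congrArg Real.log hE
          rwa [Real.log_exp] at this
        rw [Real.log_inv] at h1
        rw [hcdef, ← neg_div, eq_div_iff (ne_of_gt ha0)]
        linear_combination h1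
    · rintro (hx | hx)
      · right; rw [hx]; exact hexp_cm
      · left; rw [hx]; exact hexp_cp
  · have h3 : (F a b σ)^[3] x₀ = F a b σ (F a b σ (F a b σ x₀)) := by
      simp [Function.iterate_succ_apply, Function.iterate_zero_apply]
    rw [h3, hx₀eq]
    exact hI4
end

section
/- Fix σ ∈ (0,1) and b ∈ (0,1) such that either (b ≤ 1/2 and b < (1−σ)/(2−σ)) or (b ≥ 1/2 and b > 1/(2−σ)). Then there exists a₀ > 0 such that for every a > a₀ the map F_a(y) = (1−σ)·y + 1/(exp(a·y)+1) − b has a periodic point of least period 3, i.e. there exists z ∈ ℝ with F_a³(z) = z and F_a(z) ≠ z. -/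
open Real Filter Set

lemma F_iter3 (a b σ x : ℝ) :
    (F a b σ)^[3] x = F a b σ (F a b σ (F a b σ x)) := rfl

lemma sig_pos (x : ℝ) : 0 < 1 / (Real.exp x + 1) := by positivity

lemma sig_le_one (x : ℝ) : 1 / (Real.exp x + 1) ≤ 1 := by
  rw [div_le_one (by positivity)]
  nlinarith [Real.exp_pos x]

lemma sig_ge (x : ℝ) : 1 - Real.exp x ≤ 1 / (Real.exp x + 1) := by
  rw [le_div_iff₀ (by positivity)]
  nlinarith [sq_nonneg (Real.exp x)]

lemma sig_anti {x y : ℝ} (h : x ≤ y) :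
    1 / (Real.exp y + 1) ≤ 1 / (Real.exp x + 1) := by
  apply one_div_le_one_div_of_le (by positivity)
  have := Real.exp_le_exp.2 h
  linarith

lemma F_neg (a b σ y : ℝ) : F a b σ (-y) = - F a (1-b) σ y := by
  have hE : (0:ℝ) < Real.exp (a*y) := Real.exp_pos _
  simp only [F, mul_neg, Real.exp_neg]
  have key : 1/((Real.exp (a*y))⁻¹ + 1) = 1 - 1/(Real.exp (a*y) + 1) := by
    rw [inv_eq_one_div]
    field_simp
    ring
  rw [key]
  ring

set_option maxHeartbeats 800000 in
lemma case1 (σ b : ℝ) (hσ0 : 0 < σ) (hσ1 : σ < 1) (hb0 : 0 < b)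
    (hb : b < (1 - σ) / (2 - σ)) :
    ∃ a₀ > (0:ℝ), ∀ a > a₀, ∃ z : ℝ, (F a b σ)^[3] z = z ∧ F a b σ z ≠ z := by
  have h2σ : (0:ℝ) < 2 - σ := by linarith
  have hblraw : b * (2 - σ) < 1 - σ := (lt_div_iff₀ h2σ).1 hb
  have hb2 : b < 1/2 := by nlinarith
  obtain ⟨l, hl⟩ : ∃ x : ℝ, x = 1 - σ := ⟨_, rfl⟩
  have hl0 : (0:ℝ) < l := by rw [hl]; linarith
  have hl1 : l < 1 := by rw [hl]; linarith
  have hbl : b * (1 + l) < l := by rw [hl]; nlinarith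
  obtain ⟨z2, hz2def⟩ : ∃ x : ℝ, x = (b*(1+l) - l)/l^2 := ⟨_, rfl⟩
  have hz2neg : z2 < 0 := by
    rw [hz2def]; exact div_neg_of_neg_of_pos (by linarith only [hbl]) (by positivity)
  obtain ⟨m, hmdef⟩ : ∃ x : ℝ, x = max z2 (-b) := ⟨_, rfl⟩
  have hm0 : m < 0 := by rw [hmdef]; exact max_lt hz2neg (by linarith only [hb0])
  have hmz2 : z2 ≤ m := by rw [hmdef]; exact le_max_left _ _
  have hmb : -b ≤ m := by rw [hmdef]; exact le_max_right _ _
  obtain ⟨w, hwdef⟩ : ∃ x : ℝ, x = m/2 := ⟨_, rfl⟩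
  have hw0 : w < 0 := by rw [hwdef]; linarith
  have hz2w : z2 < w := by rw [hwdef]; linarith
  have hwb : -b/2 ≤ w := by rw [hwdef]; linarith
  have hp0 : 0 < b + w := by linarith only [hwb, hb0]
  have hp2 : b + w < 1/2 := by linarith only [hw0, hb2]
  obtain ⟨t, htdef⟩ : ∃ x : ℝ, x = Real.log ((1 - (b+w))/(b+w)) := ⟨_, rfl⟩
  have hratio : 1 < (1 - (b+w))/(b+w) := by rw [lt_div_iff₀ hp0]; linarith only [hp2]
  have ht0 : 0 < t := by rw [htdef]; exact Real.log_pos hratio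
  have hexpt : Real.exp t = (1 - (b+w))/(b+w) := by
    rw [htdef]; exact Real.exp_log (by linarith only [hratio])
  have hst : 1 / (Real.exp t + 1) = b + w := by
    rw [hexpt]
    rw [div_add' _ _ _ hp0.ne', one_div_div]
    rw [show 1 - (b+w) + 1*(b+w) = 1 by ring, div_one]
  obtain ⟨c, hcdef⟩ : ∃ x : ℝ, x = l^2*(w - z2)/2 := ⟨_, rfl⟩
  have hc0 : 0 < c := by
    rw [hcdef]
    exact div_pos (mul_pos (pow_pos hl0 2) (by linarith)) (by norm_num)
  have hlz2 : l^2 * z2 = b*(1+l) - l := by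
    rw [hz2def]
    field_simp
  have hnw : (0:ℝ) < -w := by linarith
  obtain ⟨a₀, ha₀def⟩ :
      ∃ x : ℝ, x = t/c + 2*l*t/(-w) + 2*(max 0 (-Real.log c))/(-w) + 1 := ⟨_, rfl⟩
  have h₁nn : 0 ≤ t/c := div_nonneg ht0.le hc0.le
  have h₂nn : 0 ≤ 2*l*t/(-w) := div_nonneg (by positivity) hnw.le
  have h₃nn : 0 ≤ 2*(max 0 (-Real.log c))/(-w) :=
    div_nonneg (mul_nonneg (by norm_num) (le_max_left _ _)) hnw.le
  refine ⟨a₀, by rw [ha₀def]; linarith only [h₁nn, h₂nn, h₃nn], fun a ha => ?_⟩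
  rw [ha₀def] at ha
  have haT1 : t/c < a := by linarith only [ha, h₂nn, h₃nn]
  have haT2 : 2*l*t/(-w) < a := by linarith only [ha, h₁nn, h₃nn]
  have haT3 : 2*(max 0 (-Real.log c))/(-w) < a := by linarith only [ha, h₁nn, h₂nn]
  have ha0 : (0:ℝ) < a := by linarith only [ha, h₁nn, h₂nn, h₃nn]
  obtain ⟨u, hudef⟩ : ∃ x : ℝ, x = t/a := ⟨_, rfl⟩
  have hu0 : 0 < u := by rw [hudef]; exact div_pos ht0 ha0
  have hau : a * u = t := by rw [hudef]; field_simp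
  have hFeval : ∀ x : ℝ, F a b σ x = l*x + 1/(Real.exp (a*x) + 1) - b := by
    intro x
    simp only [F, hl]
  have hy1 : F a b σ u = l*u + w := by
    rw [hFeval, hau, hst]; ring
  have hlu : l * u < -w/2 := by
    have h2 : 2*l*t < a*(-w) := (div_lt_iff₀ hnw).1 haT2
    rw [hudef, ← mul_div_assoc, div_lt_iff₀ ha0]
    linarith only [h2]
  have hy1ub : F a b σ u ≤ w/2 := by rw [hy1]; linarith only [hlu, hw0]
  have hy1lb : w ≤ F a b σ u := by
    rw [hy1]; linarith only [mul_pos hl0 hu0]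
  have hE : Real.exp (a*w/2) ≤ c := by
    have h3 : 2*(max 0 (-Real.log c)) < a*(-w) := (div_lt_iff₀ hnw).1 haT3
    have h4 : -Real.log c ≤ max 0 (-Real.log c) := le_max_right _ _
    have h5 : a*w/2 ≤ Real.log c := by linarith only [h3, h4]
    calc Real.exp (a*w/2) ≤ Real.exp (Real.log c) := Real.exp_le_exp.2 h5
      _ = c := Real.exp_log hc0
  have hay1 : a * (F a b σ u) ≤ a*w/2 := by
    have := mul_le_mul_of_nonneg_left hy1ub ha0.le
    linarith only [this, hb0]
  have hsy1 : 1 - c ≤ 1/(Real.exp (a * F a b σ u) + 1) := by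
    have h6 := sig_ge (a * F a b σ u)
    have h7 : Real.exp (a * F a b σ u) ≤ Real.exp (a*w/2) := Real.exp_le_exp.2 hay1
    linarith only [h6, h7, hE]
  have hy2lb : l*w + 1 - b - c ≤ F a b σ (F a b σ u) := by
    rw [hFeval (F a b σ u)]
    have h8 : l*w ≤ l * F a b σ u := mul_le_mul_of_nonneg_left hy1lb hl0.le
    linarith only [h8, hsy1]
  have hy3lb : c ≤ F a b σ (F a b σ (F a b σ u)) := by
    rw [hFeval (F a b σ (F a b σ u))]
    have h9 : l*(l*w + 1 - b - c) ≤ l * F a b σ (F a b σ u) :=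
      mul_le_mul_of_nonneg_left hy2lb hl0.le
    have h10 := sig_pos (a * F a b σ (F a b σ u))
    have h11 : l*c ≤ c := by linarith only [mul_pos (sub_pos.2 hl1) hc0]
    linarith only [h9, h10, h11, hlz2, hcdef]
  have huc : u < c := by
    have htc : t < a*c := (div_lt_iff₀ hc0).1 haT1
    rw [hudef, div_lt_iff₀ ha0]; linarith only [htc]
  have hu_lt_y3 : u < F a b σ (F a b σ (F a b σ u)) := lt_of_lt_of_le huc hy3lb
  have hl3 : l^3 < 1 := pow_lt_one₀ hl0.le hl1 (by norm_num)
  have hl3' : (0:ℝ) < 1 - l^3 := by linarith only [hl3]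
  obtain ⟨R, hRdef⟩ : ∃ x : ℝ, x = max u (3/(1-l^3)) + 1 := ⟨_, rfl⟩
  have huR : u < R := by
    have := le_max_left u (3/(1-l^3)); rw [hRdef]; linarith only [this]
  have hRb : 3/(1-l^3) < R := by
    have := le_max_right u (3/(1-l^3)); rw [hRdef]; linarith only [this]
  have hFle : ∀ x : ℝ, F a b σ x ≤ l*x + 1 := by
    intro x
    rw [hFeval]
    have := sig_le_one (a*x)
    linarith only [this, hb0]
  have hR3 : F a b σ (F a b σ (F a b σ R)) < R := by
    have hA := hFle R
    have hB := hFle (F a b σ R)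
    have hC := hFle (F a b σ (F a b σ R))
    have hA' : l * F a b σ R ≤ l*(l*R+1) := mul_le_mul_of_nonneg_left hA hl0.le
    have hB' : l * F a b σ (F a b σ R) ≤ l*(l*(l*R+1)+1) :=
      mul_le_mul_of_nonneg_left (by linarith only [hB, hA']) hl0.le
    have h12 : 3 < R*(1-l^3) := (div_lt_iff₀ hl3').1 hRb
    have hll : l^2 < 1 := pow_lt_one₀ hl0.le hl1 (by norm_num)
    linarith only [hC, hB', h12, hll, hl1]
  have hcont : Continuous (F a b σ) := by
    have h1 : Continuous fun y : ℝ => Real.exp (a*y) + 1 :=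
      (Real.continuous_exp.comp (continuous_const.mul continuous_id)).add continuous_const
    have h2 : Continuous fun y : ℝ => 1/(Real.exp (a*y) + 1) :=
      continuous_const.div h1 (fun x => by positivity)
    have h3 : Continuous fun y : ℝ => (1-σ)*y + 1/(Real.exp (a*y)+1) - b :=
      ((continuous_const.mul continuous_id).add h2).sub continuous_const
    exact h3
  have hgc : Continuous fun x : ℝ => F a b σ (F a b σ (F a b σ x)) - x :=
    (hcont.comp (hcont.comp hcont)).sub continuous_id
  have hmem : (0:ℝ) ∈ Icc ((fun x : ℝ => F a b σ (F a b σ (F a b σ x)) - x) R)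
      ((fun x : ℝ => F a b σ (F a b σ (F a b σ x)) - x) u) := by
    simp only [Set.mem_Icc]
    constructor
    · linarith only [hR3]
    · linarith only [hu_lt_y3]
  obtain ⟨z, hzmem, hz⟩ := intermediate_value_Icc' huR.le hgc.continuousOn hmem
  have hz' : F a b σ (F a b σ (F a b σ z)) - z = 0 := hz
  have hzu : u ≤ z := hzmem.1
  refine ⟨z, ?_, ?_⟩
  · rw [F_iter3]; linarith only [hz']
  · have hmono : 1/(Real.exp (a*z) + 1) ≤ 1/(Real.exp (a*u) + 1) :=
      sig_anti (mul_le_mul_of_nonneg_left hzu ha0.le)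
    have h13 : σ*u ≤ σ*z := mul_le_mul_of_nonneg_left hzu hσ0.le
    have key : F a b σ z - z ≤ F a b σ u - u := by
      rw [hFeval z, hFeval u, hl]
      linarith only [hmono, h13]
    have h15 : F a b σ u - u < 0 := by
      rw [hy1, hl]
      linarith only [mul_pos hσ0 hu0, hw0]
    have : F a b σ z < z := by linarith only [key, h15]
    exact ne_of_lt this

/-- For large `a` the map `F_a` has a periodic point of least period 3. -/
theorem period_three_point (σ b : ℝ) (hσ : σ ∈ Set.Ioo (0:ℝ) 1)
    (hb : b ∈ Set.Ioo (0:ℝ) 1)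
    (hcond : (b ≤ 1/2 ∧ b < (1 - σ) / (2 - σ)) ∨ (1/2 ≤ b ∧ 1 / (2 - σ) < b)) :
    ∃ a₀ > (0:ℝ), ∀ a > a₀,
      ∃ z : ℝ, (F a b σ)^[3] z = z ∧ F a b σ z ≠ z := by
  obtain ⟨hσ0, hσ1⟩ := hσ
  obtain ⟨hb0, hb1⟩ := hb
  rcases hcond with ⟨_, h2⟩ | ⟨_, h2⟩
  · exact case1 σ b hσ0 hσ1 hb0 h2
  · have h2σ : (0:ℝ) < 2 - σ := by linarith
    have h3 : (1:ℝ) < b*(2-σ) := (div_lt_iff₀ h2σ).1 h2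
    have hb' : 1 - b < (1-σ)/(2-σ) := by
      rw [lt_div_iff₀ h2σ]; nlinarith
    obtain ⟨a₀, ha₀, H⟩ := case1 σ (1-b) hσ0 hσ1 (by linarith) hb'
    refine ⟨a₀, ha₀, fun a ha => ?_⟩
    obtain ⟨z, hz1, hz2⟩ := H a ha
    have h := hz1
    rw [F_iter3] at h
    refine ⟨-z, ?_, ?_⟩
    · rw [F_iter3, F_neg, F_neg, F_neg, h]
    · rw [F_neg]
      intro hcontra
      exact hz2 (neg_injective hcontra)
end
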